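/- Let s be a schedule whose conflict graph contains a conflict cycle, and let m be the number of distinct objects on which the edges of this cycle are witnessed. Then the conflict graph of s contains a conflict cycle whose transactions are among the transactions of the original cycle, which has at most 2m edges, and in which, for every object x, the edges on x number at most two and are consecutive along the cycle. -/
import Mathlib


/-- The kind of an operation: read or write. -/
inductive OpKind where
  | read : OpKind
  | write : OpKind
deriving DecidableEq

/-- An operation: a transaction identifier, an object identifier, and a kind. -/
structure Op where
  txn : ℕ
  obj : ℕ
  kind : OpKind

/-- The conflict graph of schedule `s` has an edge on object `x` from `t₁` to `t₂`:
some operation of `t₁` on `x` conflicts with a later-positioned operation of `t₂` on `x`. -/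
def ConflictEdgeOn (s : List Op) (x t₁ t₂ : ℕ) : Prop :=
  ∃ (i j : ℕ) (p q : Op), i < j ∧ s[i]? = some p ∧ s[j]? = some q ∧
    p.txn = t₁ ∧ q.txn = t₂ ∧ t₁ ≠ t₂ ∧
    p.obj = x ∧ q.obj = x ∧
    (p.kind = OpKind.write ∨ q.kind = OpKind.write)

/-- A conflict cycle in the conflict graph of schedule `s`: `len` pairwise
distinct transactions `txn 0 → txn 1 → ⋯ → txn (len-1) → txn 0`, where the
`k`-th edge is witnessed on object `obj k`. -/
structure ConflictCycle (s : List Op) where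
  len : ℕ
  len_pos : 0 < len
  txn : Fin len → ℕ
  obj : Fin len → ℕ
  inj : Function.Injective txn
  edges : ∀ k : Fin len,
    ConflictEdgeOn s (obj k) (txn k)
      (txn ⟨(k.val + 1) % len, Nat.mod_lt _ len_pos⟩)

lemma mod_small (a n : ℕ) (h : a < 2 * n) (_hn : 0 < n) : a % n = a ∨ a % n + n = a := by
  rcases Nat.lt_or_ge a n with h' | h'
  · exact Or.inl (Nat.mod_eq_of_lt h')
  · right
    rw [Nat.mod_eq_sub_mod h', Nat.mod_eq_of_lt (by omega)]
    omega

lemma exists_write_of_edge {s : List Op} {x t₁ t₂ : ℕ} (h : ConflictEdgeOn s x t₁ t₂) :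
    ∃ (P : ℕ) (w : Op), s[P]? = some w ∧ w.obj = x ∧ w.kind = OpKind.write ∧ (w.txn = t₁ ∨ w.txn = t₂) := by
  obtain ⟨i, j, p, q, hij, hp, hq, hpt, hqt, hne, hpo, hqo, hw⟩ := h
  rcases hw with hw | hw
  · exact ⟨i, p, hp, hpo, hw, Or.inl hpt⟩
  · exact ⟨j, q, hq, hqo, hw, Or.inr hqt⟩

lemma pivot {s : List Op} {x u v P : ℕ} {w : Op} (hP : s[P]? = some w) (hobj : w.obj = x)
    (hw : w.kind = OpKind.write) (h : ConflictEdgeOn s x u v)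
    (hu : u ≠ w.txn) (hv : v ≠ w.txn) :
    ConflictEdgeOn s x w.txn v ∨ ConflictEdgeOn s x u w.txn := by
  obtain ⟨i, j, p, q, hij, hp, hq, hpt, hqt, hne, hpo, hqo, _⟩ := h
  rcases lt_trichotomy P j with h1 | h1 | h1
  · exact Or.inl ⟨P, j, w, q, h1, hP, hq, rfl, hqt, Ne.symm hv, hobj, hqo, Or.inl hw⟩
  · subst h1
    rw [hP] at hq
    have : w = q := by injection hq
    exact absurd (show v = w.txn by rw [← hqt, ← this]) hv
  · exact Or.inr ⟨i, P, p, w, hij.trans h1, hp, hP, hpt, rfl, hu, hpo, hobj, Or.inr hw⟩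

lemma cross_edge {s : List Op} {x a b c d : ℕ} (e1 : ConflictEdgeOn s x a b)
    (e2 : ConflictEdgeOn s x c d)
    (hac : a ≠ c) (had : a ≠ d) (hbc : b ≠ c) (hbd : b ≠ d) :
    ConflictEdgeOn s x a d ∨ ConflictEdgeOn s x c a ∨
    ConflictEdgeOn s x b d ∨ ConflictEdgeOn s x c b := by
  obtain ⟨P, w, hP, ho, hw, ht⟩ := exists_write_of_edge e1
  rcases ht with ht | ht
  · rcases pivot hP ho hw e2 (by rw [ht]; exact hac.symm) (by rw [ht]; exact had.symm) with h | h
    · rw [ht] at h; exact Or.inl h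
    · rw [ht] at h; exact Or.inr (Or.inl h)
  · rcases pivot hP ho hw e2 (by rw [ht]; exact hbc.symm) (by rw [ht]; exact hbd.symm) with h | h
    · rw [ht] at h; exact Or.inr (Or.inr (Or.inl h))
    · rw [ht] at h; exact Or.inr (Or.inr (Or.inr h))

lemma three_to_two {s : List Op} {x a b c : ℕ} (hab : a ≠ b) (hbc : b ≠ c) (hca : c ≠ a)
    (e1 : ConflictEdgeOn s x a b) (e2 : ConflictEdgeOn s x b c) (e3 : ConflictEdgeOn s x c a) :
    ∃ u v, u ≠ v ∧ (u = a ∨ u = b ∨ u = c) ∧ (v = a ∨ v = b ∨ v = c) ∧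
      ConflictEdgeOn s x u v ∧ ConflictEdgeOn s x v u := by
  obtain ⟨P, w, hP, ho, hw, ht⟩ := exists_write_of_edge e1
  rcases ht with ht | ht
  · rcases pivot hP ho hw e2 (by rw [ht]; exact hab.symm) (by rw [ht]; exact hca) with h | h
    · rw [ht] at h
      exact ⟨a, c, fun h' => hca h'.symm, Or.inl rfl, Or.inr (Or.inr rfl), h, e3⟩
    · rw [ht] at h
      exact ⟨a, b, hab, Or.inl rfl, Or.inr (Or.inl rfl), e1, h⟩
  · rcases pivot hP ho hw e3 (by rw [ht]; exact hbc.symm) (by rw [ht]; exact hab) with h | h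
    · rw [ht] at h
      exact ⟨a, b, hab, Or.inl rfl, Or.inr (Or.inl rfl), e1, h⟩
    · rw [ht] at h
      exact ⟨b, c, hbc, Or.inr (Or.inl rfl), Or.inr (Or.inr rfl), e2, h⟩

lemma twocycle_exists (s : List Op) (x u v : ℕ) (huv : u ≠ v)
    (h1 : ConflictEdgeOn s x u v) (h2 : ConflictEdgeOn s x v u) :
    ∃ c : ConflictCycle s, c.len = 2 ∧ (∀ k, c.txn k = u ∨ c.txn k = v) ∧ (∀ k, c.obj k = x) := by
  refine ⟨⟨2, by norm_num, fun k => if k.val = 0 then u else v, fun _ => x, ?_, ?_⟩,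
    rfl, ?_, fun _ => rfl⟩
  · intro k1 k2 h
    fin_cases k1 <;> fin_cases k2 <;> simp_all
  · intro k
    fin_cases k
    · simpa using h1
    · simpa using h2
  · intro k
    by_cases h : k.val = 0 <;> simp [h]

lemma shortcut_exists (s : List Op) (c : ConflictCycle s) (x : ℕ) (u v : Fin c.len)
    (huv : v ≠ u) (hsucc : v.val ≠ (u.val + 1) % c.len)
    (he : ConflictEdgeOn s x (c.txn u) (c.txn v)) :
    ∃ c' : ConflictCycle s, c'.len < c.len ∧ (∀ k, ∃ l, c'.txn k = c.txn l) ∧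
      (∀ k, c'.obj k = x ∨ ∃ l, c'.obj k = c.obj l) := by
  have hn0 : 0 < c.len := c.len_pos
  obtain ⟨d, hd⟩ : ∃ d, d = (u.val + c.len - v.val) % c.len := ⟨_, rfl⟩
  have hdn : d < c.len := hd ▸ Nat.mod_lt _ hn0
  have hun := u.isLt
  have hvn := v.isLt
  have hvu : v.val ≠ u.val := fun h => huv (Fin.ext h)
  have h1 : d = u.val + c.len - v.val ∨ d + c.len = u.val + c.len - v.val := by
    rw [hd]; exact mod_small (u.val + c.len - v.val) c.len (by omega) hn0
  have hd1 : 1 ≤ d := by rcases h1 with h1 | h1 <;> omega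
  have hd2 : d + 1 < c.len := by
    have h2 := mod_small (u.val + 1) c.len (by omega) hn0
    have h2' : (u.val + 1) % c.len < c.len := Nat.mod_lt _ hn0
    rcases h1 with h1 | h1 <;> rcases h2 with h2 | h2 <;> omega
  have key : (v.val + d) % c.len = u.val := by
    have h2 := mod_small (v.val + d) c.len (by omega) hn0
    have h3 : (v.val + d) % c.len < c.len := Nat.mod_lt _ hn0
    rcases h1 with h1 | h1 <;> rcases h2 with h2 | h2 <;> omega
  have hinj : Function.Injective
      (fun k : Fin (d + 1) => c.txn ⟨(v.val + k.val) % c.len, Nat.mod_lt _ hn0⟩) := by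
    intro k1 k2 h
    have h' := c.inj h
    have h'' : (v.val + k1.val) % c.len = (v.val + k2.val) % c.len := congrArg Fin.val h'
    have hk1 := k1.isLt
    have hk2 := k2.isLt
    have a1 := mod_small (v.val + k1.val) c.len (by omega) hn0
    have a2 := mod_small (v.val + k2.val) c.len (by omega) hn0
    rcases a1 with a1 | a1 <;> rcases a2 with a2 | a2 <;> exact Fin.ext (by omega)
  have hedg : ∀ k : Fin (d + 1),
      ConflictEdgeOn s
        ((fun k : Fin (d + 1) => if k.val = d then x
            else c.obj ⟨(v.val + k.val) % c.len, Nat.mod_lt _ hn0⟩) k)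
        ((fun k : Fin (d + 1) => c.txn ⟨(v.val + k.val) % c.len, Nat.mod_lt _ hn0⟩) k)
        ((fun k : Fin (d + 1) => c.txn ⟨(v.val + k.val) % c.len, Nat.mod_lt _ hn0⟩)
          ⟨(k.val + 1) % (d + 1), Nat.mod_lt _ (Nat.succ_pos d)⟩) := by
    intro k
    have hk := k.isLt
    simp only
    rcases Nat.lt_or_ge k.val d with hkd | hkd
    · have hmod : (k.val + 1) % (d + 1) = k.val + 1 := Nat.mod_eq_of_lt (by omega)
      have e := c.edges ⟨(v.val + k.val) % c.len, Nat.mod_lt _ hn0⟩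
      have hfin : (⟨((v.val + k.val) % c.len + 1) % c.len, Nat.mod_lt _ c.len_pos⟩ : Fin c.len)
          = ⟨(v.val + ((k.val + 1) % (d + 1))) % c.len, Nat.mod_lt _ hn0⟩ := by
        apply Fin.ext
        simp only [hmod]
        rw [Nat.mod_add_mod, Nat.add_assoc]
      rw [hfin] at e
      simpa [if_neg (show ¬ k.val = d by omega)] using e
    · have hkd' : k.val = d := by omega
      have hmod : (k.val + 1) % (d + 1) = 0 := by rw [hkd']; simp
      have hfin1 : (⟨(v.val + k.val) % c.len, Nat.mod_lt _ hn0⟩ : Fin c.len) = u := by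
        apply Fin.ext; rw [hkd']; exact key
      have hfin2 : (⟨(v.val + ((k.val + 1) % (d + 1))) % c.len, Nat.mod_lt _ hn0⟩
          : Fin c.len) = v := by
        apply Fin.ext
        simp only [hmod, Nat.add_zero]
        exact Nat.mod_eq_of_lt hvn
      rw [if_pos hkd', hfin1, hfin2]
      exact he
  refine ⟨⟨d + 1, Nat.succ_pos _,
    fun k => c.txn ⟨(v.val + k.val) % c.len, Nat.mod_lt _ hn0⟩,
    fun k => if k.val = d then x else c.obj ⟨(v.val + k.val) % c.len, Nat.mod_lt _ hn0⟩,
    hinj, hedg⟩, by simpa using hd2, fun k => ⟨_, rfl⟩, ?_⟩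
  intro k
  by_cases h : k.val = d
  · left; simp [h]
  · right
    refine ⟨⟨(v.val + k.val) % c.len, Nat.mod_lt _ hn0⟩, ?_⟩
    simp [h]

lemma succ_mod_inj {n a b : ℕ} (ha : a < n) (hb : b < n)
    (h : (a + 1) % n = (b + 1) % n) : a = b := by
  have c1 := mod_small (a + 1) n (by omega) (by omega)
  have c2 := mod_small (b + 1) n (by omega) (by omega)
  have d1 : (a + 1) % n < n := Nat.mod_lt _ (by omega)
  have d2 : (b + 1) % n < n := Nat.mod_lt _ (by omega)
  rcases c1 with c1 | c1 <;> rcases c2 with c2 | c2 <;> omega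

lemma succ_mod_ne {n a : ℕ} (hn : 2 ≤ n) (ha : a < n) : (a + 1) % n ≠ a := by
  have c1 := mod_small (a + 1) n (by omega) (by omega)
  rcases c1 with c1 | c1 <;> omega

lemma reduce (s : List Op) : ∀ (N : ℕ) (c : ConflictCycle s), c.len ≤ N →
    ∃ c' : ConflictCycle s,
      (∀ k, ∃ l, c'.txn k = c.txn l) ∧
      (∀ k, ∃ l, c'.obj k = c.obj l) ∧
      (∀ x : ℕ,
        (Finset.univ.filter (fun k : Fin c'.len => c'.obj k = x)).card ≤ 2 ∧
        (∀ k l : Fin c'.len, c'.obj k = x → c'.obj l = x →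
          k = l ∨ (k.val + 1) % c'.len = l.val ∨ (l.val + 1) % c'.len = k.val)) := by
  intro N
  induction N with
  | zero => intro c hc; exact absurd hc (by have := c.len_pos; omega)
  | succ N ih =>
    intro c hc
    by_cases hbad : ∃ k l : Fin c.len, c.obj k = c.obj l ∧ k ≠ l ∧
        (k.val + 1) % c.len ≠ l.val ∧ (l.val + 1) % c.len ≠ k.val
    · -- two non-adjacent edges on the same object: shortcut via a chord
      obtain ⟨k, l, hobj, hkl, hxl, hlk⟩ := hbad
      have hklv : k.val ≠ l.val := fun h => hkl (Fin.ext h)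
      have hn2 : 2 ≤ c.len := by have := k.isLt; have := l.isLt; omega
      set sk : Fin c.len := ⟨(k.val + 1) % c.len, Nat.mod_lt _ c.len_pos⟩ with hsk
      set sl : Fin c.len := ⟨(l.val + 1) % c.len, Nat.mod_lt _ c.len_pos⟩ with hsl
      have hk_sk : k ≠ sk := fun h => succ_mod_ne hn2 k.isLt (congrArg Fin.val h).symm
      have hl_sl : l ≠ sl := fun h => succ_mod_ne hn2 l.isLt (congrArg Fin.val h).symm
      have hk_sl : k ≠ sl := fun h => hlk (congrArg Fin.val h).symm
      have hl_sk : l ≠ sk := fun h => hxl (congrArg Fin.val h).symm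
      have hsk_sl : sk ≠ sl := fun h => hkl (Fin.ext (succ_mod_inj k.isLt l.isLt (congrArg Fin.val h)))
      have tne : ∀ a b : Fin c.len, a ≠ b → c.txn a ≠ c.txn b := fun a b hab h => hab (c.inj h)
      have e1 := c.edges k
      have e2 := c.edges l
      rw [← hobj] at e2
      have hcross := cross_edge e1 e2 (tne k l hkl) (tne k sl hk_sl) (tne sk l hl_sk.symm)
        (tne sk sl hsk_sl)
      have hshort : ∃ c₂ : ConflictCycle s, c₂.len < c.len ∧ (∀ k', ∃ l', c₂.txn k' = c.txn l') ∧
          (∀ k', c₂.obj k' = c.obj k ∨ ∃ l', c₂.obj k' = c.obj l') := by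
        have hskv : sk.val = (k.val + 1) % c.len := rfl
        have hslv : sl.val = (l.val + 1) % c.len := rfl
        rcases hcross with h | h | h | h
        · refine shortcut_exists s c (c.obj k) k sl hk_sl.symm ?_ h
          intro he
          rw [hslv] at he
          exact hkl (Fin.ext (succ_mod_inj l.isLt k.isLt he)).symm
        · exact shortcut_exists s c (c.obj k) l k hkl (fun he => hlk he.symm) h
        · refine shortcut_exists s c (c.obj k) sk sl hsk_sl.symm ?_ h
          intro he
          rw [hslv, hskv] at he
          exact hl_sk (Fin.ext (succ_mod_inj l.isLt (Nat.mod_lt _ c.len_pos) he))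
        · refine shortcut_exists s c (c.obj k) l sk hl_sk.symm ?_ h
          intro he
          rw [hskv] at he
          exact hkl (Fin.ext (succ_mod_inj k.isLt l.isLt he))
      obtain ⟨c₂, hlen, ht2, ho2⟩ := hshort
      obtain ⟨c', ht', ho', hx'⟩ := ih c₂ (by omega)
      refine ⟨c', ?_, ?_, hx'⟩
      · intro k'
        obtain ⟨l1, h1⟩ := ht' k'
        obtain ⟨l2, h2⟩ := ht2 l1
        exact ⟨l2, h1.trans h2⟩
      · intro k'
        obtain ⟨l1, h1⟩ := ho' k'
        rcases ho2 l1 with h2 | ⟨l2, h2⟩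
        · exact ⟨k, h1.trans h2⟩
        · exact ⟨l2, h1.trans h2⟩
    · have hadj : ∀ k l : Fin c.len, c.obj k = c.obj l → k ≠ l →
          (k.val + 1) % c.len = l.val ∨ (l.val + 1) % c.len = k.val := by
        intro k l h hne
        by_contra hcon
        push_neg at hcon
        exact hbad ⟨k, l, h, hne, hcon.1, hcon.2⟩
      by_cases hbig : ∃ x, 2 < (Finset.univ.filter (fun k : Fin c.len => c.obj k = x)).card
      · -- three pairwise adjacent edges on one object: a directed triangle on x
        obtain ⟨x, hx⟩ := hbig
        rw [Finset.two_lt_card] at hx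
        obtain ⟨k1, hk1, k2, hk2, k3, hk3, h12, h13, h23⟩ := hx
        simp only [Finset.mem_filter, Finset.mem_univ, true_and] at hk1 hk2 hk3
        have hchain : ∃ a b cc : Fin c.len, c.obj a = x ∧ c.obj b = x ∧ c.obj cc = x ∧
            a ≠ b ∧ b ≠ cc ∧ cc ≠ a ∧
            (a.val + 1) % c.len = b.val ∧ (b.val + 1) % c.len = cc.val ∧
            (cc.val + 1) % c.len = a.val := by
          rcases hadj k1 k2 (hk1.trans hk2.symm) h12 with s1 | s1
          · rcases hadj k1 k3 (hk1.trans hk3.symm) h13 with s2 | s2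
            · exact absurd (Fin.ext (s1.symm.trans s2) : k2 = k3) h23
            · rcases hadj k2 k3 (hk2.trans hk3.symm) h23 with s3 | s3
              · exact ⟨k1, k2, k3, hk1, hk2, hk3, h12, h23, fun h => h13 h.symm, s1, s3, s2⟩
              · exact absurd (Fin.ext (s2.symm.trans s3) : k1 = k2) h12
          · rcases hadj k2 k3 (hk2.trans hk3.symm) h23 with s2 | s2
            · exact absurd (Fin.ext (s1.symm.trans s2) : k1 = k3) h13
            · rcases hadj k1 k3 (hk1.trans hk3.symm) h13 with s3 | s3
              · exact ⟨k2, k1, k3, hk2, hk1, hk3, fun h => h12 h.symm, h13, fun h => h23 h.symm,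
                  s1, s3, s2⟩
              · exact absurd (Fin.ext (s3.symm.trans s2) : k1 = k2) h12
        obtain ⟨a, b, cc, hoa, hob, hoc, hab, hbc, hca, s1, s2, s3⟩ := hchain
        have tne : ∀ p q : Fin c.len, p ≠ q → c.txn p ≠ c.txn q := fun p q h hh => h (c.inj hh)
        have e1 : ConflictEdgeOn s x (c.txn a) (c.txn b) := by
          have e := c.edges a
          rw [hoa, show (⟨(a.val + 1) % c.len, Nat.mod_lt _ c.len_pos⟩ : Fin c.len) = b
            from Fin.ext s1] at e
          exact e
        have e2 : ConflictEdgeOn s x (c.txn b) (c.txn cc) := by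
          have e := c.edges b
          rw [hob, show (⟨(b.val + 1) % c.len, Nat.mod_lt _ c.len_pos⟩ : Fin c.len) = cc
            from Fin.ext s2] at e
          exact e
        have e3 : ConflictEdgeOn s x (c.txn cc) (c.txn a) := by
          have e := c.edges cc
          rw [hoc, show (⟨(cc.val + 1) % c.len, Nat.mod_lt _ c.len_pos⟩ : Fin c.len) = a
            from Fin.ext s3] at e
          exact e
        obtain ⟨u, v, huv, hu, hv, g1, g2⟩ :=
          three_to_two (tne a b hab) (tne b cc hbc) (tne cc a hca) e1 e2 e3
        obtain ⟨c₂, hlen2, ht2, ho2⟩ := twocycle_exists s x u v huv g1 g2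
        have hn3 : 3 ≤ c.len := by
          have h1 : a.val ≠ b.val := fun h => hab (Fin.ext h)
          have h2 : b.val ≠ cc.val := fun h => hbc (Fin.ext h)
          have h3 : cc.val ≠ a.val := fun h => hca (Fin.ext h)
          have := a.isLt; have := b.isLt; have := cc.isLt
          omega
        obtain ⟨c', ht', ho', hx'⟩ := ih c₂ (by omega)
        refine ⟨c', ?_, ?_, hx'⟩
        · intro k'
          obtain ⟨l1, h1⟩ := ht' k'
          have hmem : c₂.txn l1 = c.txn a ∨ c₂.txn l1 = c.txn b ∨ c₂.txn l1 = c.txn cc := by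
            rcases ht2 l1 with h2 | h2 <;> rw [h2]
            · exact hu
            · exact hv
          rcases hmem with h2 | h2 | h2
          · exact ⟨a, h1.trans h2⟩
          · exact ⟨b, h1.trans h2⟩
          · exact ⟨cc, h1.trans h2⟩
        · intro k'
          obtain ⟨l1, h1⟩ := ho' k'
          exact ⟨a, by rw [h1, ho2 l1, ← hoa]⟩
      · refine ⟨c, fun k => ⟨k, rfl⟩, fun k => ⟨k, rfl⟩, fun x => ⟨?_, ?_⟩⟩
        · by_contra h
          push_neg at h
          exact hbig ⟨x, h⟩
        · intro k l hk hl
          by_cases h : k = l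
          · exact Or.inl h
          · exact Or.inr (hadj k l (hk.trans hl.symm) h)

/-- If the conflict graph of `s` contains a conflict cycle whose edges are
witnessed on `m` distinct objects, then it contains a conflict cycle over a
subset of the same transactions having at most `2 * m` edges, in which for every
object `x` the edges on `x` number at most two and are consecutive. -/
theorem cycle_reduces_to_two_edges_per_object
    (s : List Op) (c : ConflictCycle s) :
    ∃ c' : ConflictCycle s,
      (∀ k : Fin c'.len, ∃ l : Fin c.len, c'.txn k = c.txn l) ∧
      c'.len ≤ 2 * (Finset.univ.image c.obj).card ∧
      (∀ x : ℕ,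
        (Finset.univ.filter (fun k : Fin c'.len => c'.obj k = x)).card ≤ 2 ∧
        (∀ k l : Fin c'.len, c'.obj k = x → c'.obj l = x →
          k = l ∨ (k.val + 1) % c'.len = l.val ∨ (l.val + 1) % c'.len = k.val)) := by
  obtain ⟨c', ht, ho, hx⟩ := reduce s c.len c le_rfl
  refine ⟨c', ht, ?_, hx⟩
  have himg : Finset.univ.image c'.obj ⊆ Finset.univ.image c.obj := by
    intro x hx'
    simp only [Finset.mem_image, Finset.mem_univ, true_and] at hx' ⊢
    obtain ⟨k, hk⟩ := hx'
    obtain ⟨l, hl⟩ := ho k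
    exact ⟨l, by rw [← hl, hk]⟩
  calc c'.len = (Finset.univ : Finset (Fin c'.len)).card := by simp
    _ = ∑ x ∈ Finset.univ.image c'.obj,
          (Finset.univ.filter (fun k : Fin c'.len => c'.obj k = x)).card :=
        Finset.card_eq_sum_card_image c'.obj Finset.univ
    _ ≤ ∑ _x ∈ Finset.univ.image c'.obj, 2 := Finset.sum_le_sum (fun x _ => (hx x).1)
    _ = 2 * (Finset.univ.image c'.obj).card := by rw [Finset.sum_const]; ring
    _ ≤ 2 * (Finset.univ.image c.obj).card := by
        have := Finset.card_le_card himg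
        omega
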